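/- For every n ≥ 1, the 2-dicoloring graph of the cyclic circulant tournament C⃗_{2n+1}(1,2,…,n) is a cycle of length 4n+2, and hence has diameter 2n+1. -/

import Mathlib

/-- A set `S` of vertices induces an acyclic subdigraph of the digraph with
arc relation `A`: there is no directed cycle within `S`. -/
def AcyclicOn {V : Type*} (A : V → V → Prop) (S : Set V) : Prop :=
  ∀ v, ¬ Relation.TransGen (fun x y => x ∈ S ∧ y ∈ S ∧ A x y) v v

/-- An acyclic `k`-coloring: every color class induces an acyclic subdigraph. -/
def IsAcyclicColoring {V : Type*} (A : V → V → Prop) (k : ℕ) (α : V → Fin k) : Prop :=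
  ∀ c : Fin k, AcyclicOn A {v | α v = c}

/-- The `k`-dicoloring graph: vertices are acyclic `k`-colorings, two colorings
adjacent when they differ on exactly one vertex. -/
def DicolGraph {V : Type*} (A : V → V → Prop) (k : ℕ) :
    SimpleGraph {α : V → Fin k // IsAcyclicColoring A k α} where
  Adj α β := ∃! v, α.1 v ≠ β.1 v
  symm := by
    constructor
    rintro α β ⟨v, hv, hu⟩
    exact ⟨v, Ne.symm hv, fun w hw => hu w (Ne.symm hw)⟩
  loopless := by
    constructor
    rintro α ⟨v, hv, -⟩
    exact hv rfl

/-- The cyclic circulant tournament on `ZMod (2n+1)` with jumps `1,…,n`. -/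
def CycArc (n : ℕ) (a b : ZMod (2*n+1)) : Prop := (b - a).val ∈ Finset.Icc 1 n

/-- The tournament obtained from `CycArc n` by reversing the jump `n`. -/
def RevArc (n : ℕ) (a b : ZMod (2*n+1)) : Prop :=
  (b - a).val ∈ Finset.Icc 1 (n-1) ∨ (b - a).val = n + 1

/-- A forbidden triangle in `C_{2n+1}⟨n⟩`. -/
def ForbiddenTriangle (n : ℕ) (S : Set (ZMod (2*n+1))) : Prop :=
  ∃ i : ZMod (2*n+1), S = {i, i + n, i + n + 1}

/-!
An acyclic set of the tournament has a source `s` and therefore lies in the window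
`[s, s + n]` of `n + 1` consecutive vertices. The two colour classes have `2n + 1` vertices in
total, so one of them is a whole window: the acyclic 2-colourings are exactly the colourings
`windowColoring n (i, c)`, with colour `c` on `[i, i + n]` and the other colour elsewhere.
Two of them differ in exactly one vertex iff their parameters differ by `±(n, 1)` in
`ZMod (2n+1) × Fin 2`. This element has order `4n + 2`, the size of the group, so
`k ↦ k • (n, 1)` identifies the cycle `C_{4n+2}`, of diameter `2n + 1`, with the dicolouring graph.
-/

lemma ZMod.val_sub_add_val_eq {m : ℕ} [NeZero m] (a b : ZMod m) :
    (a - b).val + b.val = a.val ∨ (a - b).val + b.val = a.val + m := by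
  rcases lt_or_ge ((a - b).val + b.val) m with h | h
  · left
    rw [← ZMod.val_add_of_lt h, sub_add_cancel]
  · right
    rw [ZMod.val_add_val_of_le h, sub_add_cancel]

lemma ZMod.val_natCast_sub_eq_ite {m k : ℕ} [NeZero m] (hk : k < m) (b : ZMod m) :
    ((k : ZMod m) - b).val = if b.val ≤ k then k - b.val else k + m - b.val := by
  have h := ZMod.val_sub_add_val_eq (k : ZMod m) b
  rw [ZMod.val_cast_of_lt hk] at h
  have := b.val_lt
  have := ((k : ZMod m) - b).val_lt
  split_ifs <;> omega

lemma ZMod.not_existsUnique_of_natCast {m k₁ k₂ : ℕ} {P : ZMod m → Prop} (h₁ : k₁ < m)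
    (h₂ : k₂ < m) (hne : k₁ ≠ k₂) (hP₁ : P k₁) (hP₂ : P k₂) : ¬ ∃! t, P t := fun h => by
  have := congrArg ZMod.val (h.unique hP₁ hP₂)
  rw [ZMod.val_cast_of_lt h₁, ZMod.val_cast_of_lt h₂] at this
  exact hne this

lemma Fin.two_ne_iff_eq_add_one : ∀ {a b : Fin 2}, a ≠ b ↔ a = b + 1 := by decide

section Acyclic

variable {V : Type*} {A : V → V → Prop} {S T : Set V}

lemma AcyclicOn.mono (h : AcyclicOn A T) (hST : S ⊆ T) : AcyclicOn A S := fun v hv =>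
  h v (Relation.TransGen.mono (fun _ _ ⟨hx, hy, hxy⟩ => ⟨hST hx, hST hy, hxy⟩) _ _ hv)

lemma acyclicOn_of_lt {β : Type*} [Preorder β] (f : V → β)
    (hf : ∀ x ∈ S, ∀ y ∈ S, A x y → f x < f y) : AcyclicOn A S := by
  have key : ∀ {x y}, Relation.TransGen (fun x y => x ∈ S ∧ y ∈ S ∧ A x y) x y → f x < f y := by
    intro x y h
    induction h with
    | single h => exact hf _ h.1 _ h.2.1 h.2.2
    | tail _ h ih => exact ih.trans (hf _ h.1 _ h.2.1 h.2.2)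
  exact fun v hv => lt_irrefl _ (key hv)

lemma AcyclicOn.exists_source [Finite V] (h : AcyclicOn A S) (hS : S.Nonempty) :
    ∃ s ∈ S, ∀ x ∈ S, ¬ A x s := by
  let r := Relation.TransGen fun x y => x ∈ S ∧ y ∈ S ∧ A x y
  have : IsTrans V r := ⟨fun _ _ _ => Relation.TransGen.trans⟩
  have : Std.Irrefl r := ⟨h⟩
  obtain ⟨s, hs, hmin⟩ := (Finite.wellFounded_of_trans_of_irrefl r).has_min S hS
  exact ⟨s, hs, fun x hx hxs => hmin x hx (.single ⟨hx, hs, hxs⟩)⟩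

end Acyclic

namespace CycArc

variable {n : ℕ}

def window (n : ℕ) (i : ZMod (2*n+1)) : Set (ZMod (2*n+1)) := {v | (v - i).val ≤ n}

instance (i : ZMod (2*n+1)) : DecidablePred (· ∈ window n i) := fun v =>
  inferInstanceAs (Decidable ((v - i).val ≤ n))

lemma mem_window {i v : ZMod (2*n+1)} : v ∈ window n i ↔ (v - i).val ≤ n := Iff.rfl

lemma acyclicOn_window (i : ZMod (2*n+1)) : AcyclicOn (CycArc n) (window n i) := by
  refine acyclicOn_of_lt (fun v => (v - i).val) fun x hx y hy hxy => ?_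
  simp only [CycArc, Finset.mem_Icc, mem_window] at hx hxy ⊢
  rw [show y - i = (x - i) + (y - x) by ring, ZMod.val_add_of_lt (by omega)]
  omega

lemma mem_window_of_not_cycArc {s x : ZMod (2*n+1)} (h : ¬ CycArc n x s) : x ∈ window n s := by
  simp only [CycArc, Finset.mem_Icc, ← neg_sub x s, ZMod.neg_val] at h
  rw [mem_window]
  split_ifs at h with hxs
  · simp [hxs]
  · have := (x - s).val_lt
    omega

lemma exists_subset_window_of_acyclicOn {S : Set (ZMod (2*n+1))} (h : AcyclicOn (CycArc n) S)
    (hS : S.Nonempty) : ∃ i, S ⊆ window n i := by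
  obtain ⟨s, -, hsrc⟩ := h.exists_source hS
  exact ⟨s, fun x hx => mem_window_of_not_cycArc (hsrc x hx)⟩

lemma window_eq_image (i : ZMod (2*n+1)) : window n i = (fun k : ℕ => i + k) '' Set.Iic n := by
  ext v
  refine ⟨fun hv => ⟨(v - i).val, hv, by simp⟩, ?_⟩
  rintro ⟨k, hk, rfl⟩
  rw [Set.mem_Iic] at hk
  rw [mem_window, add_sub_cancel_left, ZMod.val_cast_of_lt (by omega)]
  exact hk

lemma ncard_window (i : ZMod (2*n+1)) : (window n i).ncard = n + 1 := by
  rw [window_eq_image, Set.InjOn.ncard_image, Set.ncard_Iic_nat]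
  intro k hk l hl hkl
  rw [Set.mem_Iic] at hk hl
  have := congrArg ZMod.val (add_left_cancel hkl)
  rwa [ZMod.val_cast_of_lt (by omega), ZMod.val_cast_of_lt (by omega)] at this

lemma compl_window_subset (i : ZMod (2*n+1)) : (window n i)ᶜ ⊆ window n (i + (n + 1 : ℕ)) := by
  intro v hv
  simp only [Set.mem_compl_iff, mem_window, not_le] at hv
  have := (v - i).val_lt
  have hval : ((n + 1 : ℕ) : ZMod (2*n+1)).val = n + 1 := ZMod.val_cast_of_lt (by omega)
  rw [mem_window, sub_add_eq_sub_sub, ZMod.val_sub (by rw [hval]; omega), hval]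
  omega

def windowColoring (n : ℕ) (p : ZMod (2*n+1) × Fin 2) (v : ZMod (2*n+1)) : Fin 2 :=
  if v ∈ window n p.1 then p.2 else p.2 + 1

lemma isAcyclicColoring_windowColoring (p : ZMod (2*n+1) × Fin 2) :
    IsAcyclicColoring (CycArc n) 2 (windowColoring n p) := by
  intro c
  rcases eq_or_ne c p.2 with rfl | hc
  · refine (acyclicOn_window p.1).mono fun v hv => ?_
    by_contra h
    simp [windowColoring, h] at hv
  · refine (acyclicOn_window _).mono ((compl_window_subset p.1).trans' fun v hv h => ?_)
    simp [windowColoring, h, Fin.two_ne_iff_eq_add_one.1 hc] at hv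

lemma exists_eq_windowColoring {α : ZMod (2*n+1) → Fin 2}
    (hα : IsAcyclicColoring (CycArc n) 2 α) : ∃ p, α = windowColoring n p := by
  obtain ⟨c, hc⟩ : ∃ c, n + 1 ≤ {v | α v = c}.ncard := by
    have hsum := Set.ncard_add_ncard_compl {v | α v = 0}
    have hcompl : {v | α v = 0}ᶜ = {v | α v = 1} := by
      ext v
      exact Fin.two_ne_iff_eq_add_one
    rw [hcompl, Nat.card_eq_fintype_card, ZMod.card] at hsum
    by_contra! h
    linarith [h 0, h 1]
  obtain ⟨i, hi⟩ :=
    exists_subset_window_of_acyclicOn (hα c) (Set.nonempty_of_ncard_ne_zero (by omega))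
  have heq : {v | α v = c} = window n i :=
    Set.eq_of_subset_of_ncard_le hi (by rw [ncard_window]; exact hc)
  refine ⟨(i, c), funext fun v => ?_⟩
  by_cases hv : v ∈ window n i
  · rw [windowColoring, if_pos hv]
    exact (heq ▸ hv : v ∈ {v | α v = c})
  · rw [windowColoring, if_neg hv]
    exact Fin.two_ne_iff_eq_add_one.1 fun h => hv (heq ▸ h)

lemma windowColoring_add (p q : ZMod (2*n+1) × Fin 2) (v : ZMod (2*n+1)) :
    windowColoring n (p + q) (v + q.1) = windowColoring n p v + q.2 := by
  simp only [windowColoring, mem_window, Prod.fst_add, Prod.snd_add, add_sub_add_right_eq_sub]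
  split_ifs <;> abel

lemma windowColoring_ne_iff (p q : ZMod (2*n+1) × Fin 2) (v : ZMod (2*n+1)) :
    windowColoring n p v ≠ windowColoring n q v ↔
      windowColoring n 0 (v - p.1) ≠ windowColoring n (q - p) (v - p.1) := by
  have hp := windowColoring_add 0 p (v - p.1)
  have hq := windowColoring_add (q - p) p (v - p.1)
  rw [zero_add, sub_add_cancel] at hp
  rw [sub_add_cancel, sub_add_cancel] at hq
  rw [hp, hq, ne_eq, add_left_inj]

lemma windowColoring_zero_ne_natCast_iff {k : ℕ} (hk : k < 2*n+1) (d : ZMod (2*n+1) × Fin 2) :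
    windowColoring n 0 k ≠ windowColoring n d k ↔ (d.2 = 1 ↔
      (k ≤ n ↔ (if d.1.val ≤ k then k - d.1.val else k + (2*n+1) - d.1.val) ≤ n)) := by
  obtain ⟨δ, e⟩ := d
  simp only [windowColoring, mem_window, Prod.fst_zero, Prod.snd_zero, sub_zero,
    ZMod.val_cast_of_lt hk, ← ZMod.val_natCast_sub_eq_ite hk]
  fin_cases e <;> split_ifs <;> simp_all <;> omega

lemma windowColoring_zero_ne_iff (t : ZMod (2*n+1)) (d : ZMod (2*n+1) × Fin 2) :
    windowColoring n 0 t ≠ windowColoring n d t ↔ (d.2 = 1 ↔ (t.val ≤ n ↔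
      (if d.1.val ≤ t.val then t.val - d.1.val else t.val + (2*n+1) - d.1.val) ≤ n)) := by
  rw [← windowColoring_zero_ne_natCast_iff t.val_lt, ZMod.natCast_zmod_val]

def windowStep (n : ℕ) : ZMod (2*n+1) × Fin 2 := (n, 1)

lemma val_windowStep_fst : (windowStep n).1.val = n := ZMod.val_cast_of_lt (by omega)

lemma existsUnique_windowColoring_zero_ne_windowStep :
    ∃! t, windowColoring n 0 t ≠ windowColoring n (windowStep n) t := by
  refine ⟨n, (windowColoring_zero_ne_natCast_iff (by omega) _).2 ?_,
    fun t (ht : windowColoring n 0 t ≠ _) => ?_⟩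
  · rw [val_windowStep_fst]
    exact iff_of_true rfl (by simp)
  · rw [windowColoring_zero_ne_iff, val_windowStep_fst] at ht
    have := t.val_lt
    rw [← ZMod.natCast_zmod_val t]
    congr 1
    replace ht := ht.1 rfl
    split_ifs at ht <;> omega

lemma not_existsUnique_windowColoring_zero_ne {δ : ZMod (2*n+1)} {e : Fin 2} {k₁ k₂ : ℕ}
    (h₁ : k₁ < 2*n+1) (h₂ : k₂ < 2*n+1) (hne : k₁ ≠ k₂)
    (hd₁ : e = 1 ↔ (k₁ ≤ n ↔ (if δ.val ≤ k₁ then k₁ - δ.val else k₁ + (2*n+1) - δ.val) ≤ n))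
    (hd₂ : e = 1 ↔ (k₂ ≤ n ↔ (if δ.val ≤ k₂ then k₂ - δ.val else k₂ + (2*n+1) - δ.val) ≤ n)) :
    ¬ ∃! t, windowColoring n 0 t ≠ windowColoring n (δ, e) t :=
  ZMod.not_existsUnique_of_natCast h₁ h₂ hne ((windowColoring_zero_ne_natCast_iff h₁ _).2 hd₁)
    ((windowColoring_zero_ne_natCast_iff h₂ _).2 hd₂)

lemma eq_windowStep_of_existsUnique {d : ZMod (2*n+1) × Fin 2}
    (h : ∃! t, windowColoring n 0 t ≠ windowColoring n d t) :
    d = windowStep n ∨ d = -windowStep n := by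
  obtain ⟨δ, e⟩ := d
  have hδ := δ.val_lt
  obtain rfl | rfl : e = 0 ∨ e = 1 := by omega
  · exfalso
    rcases Nat.eq_zero_or_pos δ.val with h0 | hpos
    · obtain ⟨t, ht, -⟩ := h
      rw [windowColoring_zero_ne_iff, h0] at ht
      exact absurd (ht.2 (by simp)) Fin.zero_ne_one
    rcases le_or_gt δ.val n with hle | hgt
    · exact not_existsUnique_windowColoring_zero_ne (k₁ := 0) (k₂ := δ.val + n)
        (by omega) (by omega) (by omega) (iff_of_false (by decide) (by split_ifs <;> omega))
        (iff_of_false (by decide) (by split_ifs <;> omega)) h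
    · exact not_existsUnique_windowColoring_zero_ne (k₁ := δ.val) (k₂ := n)
        (by omega) (by omega) (by omega) (iff_of_false (by decide) (by split_ifs <;> omega))
        (iff_of_false (by decide) (by split_ifs <;> omega)) h
  rcases lt_or_ge δ.val n with hlt | hge
  · exact absurd h <| not_existsUnique_windowColoring_zero_ne (k₁ := δ.val) (k₂ := δ.val + 1)
      (by omega) (by omega) (by omega) (iff_of_true rfl (by split_ifs <;> omega))
      (iff_of_true rfl (by split_ifs <;> omega))
  rcases Nat.lt_or_ge (n + 1) δ.val with hgt | hle
  · exact absurd h <| not_existsUnique_windowColoring_zero_ne (k₁ := 0) (k₂ := 1)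
      (by omega) (by omega) (by omega) (iff_of_true rfl (by split_ifs <;> omega))
      (iff_of_true rfl (by split_ifs <;> omega))
  rw [← ZMod.natCast_zmod_val δ]
  obtain hn | hn1 : δ.val = n ∨ δ.val = n + 1 := by omega
  · exact .inl (by rw [hn, windowStep])
  · refine .inr (Prod.ext (eq_neg_of_add_eq_zero_left ?_) rfl)
    rw [hn1, windowStep, ← Nat.cast_add, show n + 1 + n = 2*n+1 by ring, ZMod.natCast_self]

lemma existsUnique_windowColoring_ne_iff_sub (p q : ZMod (2*n+1) × Fin 2) :
    (∃! v, windowColoring n p v ≠ windowColoring n q v) ↔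
      ∃! t, windowColoring n 0 t ≠ windowColoring n (q - p) t :=
  (Equiv.subRight p.1).existsUnique_congr (q := fun _ => _ ≠ _) (windowColoring_ne_iff p q)

lemma existsUnique_windowColoring_ne_add_windowStep (p : ZMod (2*n+1) × Fin 2) :
    ∃! v, windowColoring n p v ≠ windowColoring n (p + windowStep n) v := by
  rw [existsUnique_windowColoring_ne_iff_sub, add_sub_cancel_left]
  exact existsUnique_windowColoring_zero_ne_windowStep

lemma existsUnique_windowColoring_ne_iff (p q : ZMod (2*n+1) × Fin 2) :
    (∃! v, windowColoring n p v ≠ windowColoring n q v) ↔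
      q = p + windowStep n ∨ p = q + windowStep n := by
  refine ⟨fun h => ?_, ?_⟩
  · rw [existsUnique_windowColoring_ne_iff_sub] at h
    rcases eq_windowStep_of_existsUnique h with h | h
    · exact .inl (eq_add_of_sub_eq' h)
    · rw [← neg_sub, neg_inj] at h
      exact .inr (eq_add_of_sub_eq' h)
  · rintro (rfl | rfl)
    · exact existsUnique_windowColoring_ne_add_windowStep p
    · simpa only [ne_comm] using existsUnique_windowColoring_ne_add_windowStep q

lemma windowColoring_injective : Function.Injective (windowColoring n) := by
  intro p q h
  have hagree : ∀ t, windowColoring n 0 t = windowColoring n (q - p) t := fun t => by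
    by_contra ht
    refine (windowColoring_ne_iff p q (t + p.1)).2 ?_ (congrFun h _)
    rwa [add_sub_cancel_right]
  rw [eq_comm, ← sub_eq_zero]
  generalize q - p = d at hagree
  obtain ⟨δ, e⟩ := d
  have hδ := δ.val_lt
  have hcrit := fun k (hk : k < 2*n+1) => mt (windowColoring_zero_ne_natCast_iff hk (δ, e)).2
    (not_not.2 (hagree k))
  have h₀ := hcrit 0 (by omega)
  have h₁ := hcrit δ.val hδ
  dsimp only at h₀ h₁
  obtain rfl | rfl : e = 0 ∨ e = 1 := by omega
  · have hδ0 : δ.val = 0 := by split_ifs at h₀ h₁ <;> simp at h₀ h₁ <;> omega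
    rw [(ZMod.val_eq_zero δ).1 hδ0]
    rfl
  · split_ifs at h₀ h₁ <;> simp at h₀ h₁ <;> omega

lemma addOrderOf_windowStep : addOrderOf (windowStep n) = 4*n+2 := by
  have hgcd : Nat.gcd (2*n+1) n = 1 := by simp [Nat.gcd_comm]
  rw [windowStep, Prod.addOrderOf_mk, ZMod.addOrderOf_coe _ (by omega), hgcd, Nat.div_one,
    addOrderOf_eq_prime (p := 2) (by decide) (by decide),
    Nat.Coprime.lcm_eq_mul (Nat.coprime_two_right.2 (odd_two_mul_add_one n))]
  ring

def stepMultiple (n : ℕ) (k : Fin (4*n+2)) : ZMod (2*n+1) × Fin 2 := k.val • windowStep n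

lemma stepMultiple_injective : Function.Injective (stepMultiple n) := by
  intro k l h
  rw [stepMultiple, stepMultiple, nsmul_eq_nsmul_iff_modEq, addOrderOf_windowStep] at h
  exact Fin.ext (h.eq_of_lt_of_lt k.isLt l.isLt)

lemma stepMultiple_bijective : Function.Bijective (stepMultiple n) :=
  (Fintype.bijective_iff_injective_and_card _).2 ⟨stepMultiple_injective, by simp; ring⟩

lemma stepMultiple_add_one (k : Fin (4*n+2)) :
    stepMultiple n (k + 1) = stepMultiple n k + windowStep n := by
  rw [stepMultiple, stepMultiple, ← succ_nsmul, nsmul_eq_nsmul_iff_modEq, addOrderOf_windowStep]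
  simp [Nat.ModEq, Fin.val_add]

noncomputable def cycleGraphIsoDicolGraph (n : ℕ) :
    SimpleGraph.cycleGraph (4*n+2) ≃g DicolGraph (CycArc n) 2 where
  toEquiv := Equiv.ofBijective
    (fun k => ⟨windowColoring n (stepMultiple n k), isAcyclicColoring_windowColoring _⟩)
    ⟨fun _ _ h => stepMultiple_injective (windowColoring_injective (congrArg Subtype.val h)),
      fun ⟨_, hα⟩ => by
        obtain ⟨p, rfl⟩ := exists_eq_windowColoring hα
        obtain ⟨k, rfl⟩ := stepMultiple_bijective.2 p
        exact ⟨k, rfl⟩⟩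
  map_rel_iff' {k l} := by
    change (∃! v, windowColoring n (stepMultiple n k) v ≠
      windowColoring n (stepMultiple n l) v) ↔ _
    rw [existsUnique_windowColoring_ne_iff, ← stepMultiple_add_one, ← stepMultiple_add_one,
      stepMultiple_injective.eq_iff, stepMultiple_injective.eq_iff, SimpleGraph.cycleGraph_adj,
      sub_eq_iff_eq_add', sub_eq_iff_eq_add', or_comm]

end CycArc

namespace SimpleGraph

variable {V W : Type*} {G : SimpleGraph V} {G' : SimpleGraph W}

lemma Hom.edist_le (f : G →g G') (u v : V) : G'.edist (f u) (f v) ≤ G.edist u v := by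
  rw [edist_eq_sInf (G := G)]
  refine le_sInf ?_
  rintro _ ⟨p, rfl⟩
  simpa using SimpleGraph.edist_le (p.map f)

lemma Iso.edist_eq (f : G ≃g G') (u v : V) : G'.edist (f u) (f v) = G.edist u v :=
  le_antisymm (Hom.edist_le f.toHom u v) (by simpa using Hom.edist_le f.symm.toHom (f u) (f v))

lemma Iso.ediam_eq (f : G ≃g G') : G'.ediam = G.ediam := by
  refine le_antisymm (ediam_le_of_edist_le fun u v => ?_) (ediam_le_of_edist_le fun u v => ?_)
  · rw [← f.apply_symm_apply u, ← f.apply_symm_apply v, f.edist_eq]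
    exact edist_le_ediam
  · rw [← f.edist_eq]
    exact edist_le_ediam

lemma Walk.apply_le_apply_add_length {f : V → ℕ} (hf : ∀ x y, G.Adj x y → f y ≤ f x + 1) {u v : V} :
    (p : G.Walk u v) → f v ≤ f u + p.length
  | .nil => by simp
  | .cons h p => by
    have := p.apply_le_apply_add_length hf
    have := hf _ _ h
    rw [Walk.length_cons]
    omega

lemma cycleGraph_edist_add_le {N : ℕ} (u x : Fin (N+2)) :
    (cycleGraph (N+2)).edist u (u + x) ≤ x.val := by
  induction x using Fin.induction with
  | zero => simp
  | succ i ih =>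
    rw [Fin.val_succ, ← Fin.coeSucc_eq_succ, ← add_assoc, Nat.cast_succ]
    rw [Fin.val_castSucc] at ih
    calc _ ≤ (cycleGraph (N+2)).edist u (u + i.castSucc) +
          (cycleGraph (N+2)).edist (u + i.castSucc) (u + i.castSucc + 1) :=
          SimpleGraph.edist_triangle
      _ ≤ _ := add_le_add ih (edist_le_one_iff_adj_or_eq.2
          (.inl (cycleGraph_adj.2 (.inr (add_sub_cancel_left _ _)))))

lemma cycleGraph_edist_le {N : ℕ} (u v : Fin (N+2)) :
    (cycleGraph (N+2)).edist u v ≤ (N/2 + 1 : ℕ) := by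
  have h₁ := cycleGraph_edist_add_le u (v - u)
  have h₂ := cycleGraph_edist_add_le v (u - v)
  rw [add_sub_cancel] at h₁ h₂
  rw [edist_comm] at h₂
  have hsum : (v - u).val + (u - v).val ≤ N + 2 := by
    rw [← neg_sub v u, Fin.val_neg']
    have := Nat.mod_le (N + 2 - (v - u).val) (N + 2)
    omega
  rcases le_or_gt (v - u).val (N/2 + 1) with h | h
  · exact h₁.trans (by exact_mod_cast h)
  · exact h₂.trans (by exact_mod_cast (by omega : (u - v).val ≤ N/2 + 1))

lemma cycleGraph_ediam (N : ℕ) : (cycleGraph (N+2)).ediam = (N/2 + 1 : ℕ) := by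
  refine le_antisymm (ediam_le_of_edist_le fun u v => by exact_mod_cast cycleGraph_edist_le u v) ?_
  let f : Fin (N+2) → ℕ := fun x => min x.val (N + 2 - x.val)
  have hf : ∀ x y, (cycleGraph (N+2)).Adj x y → f y ≤ f x + 1 := by
    intro x y h
    rw [cycleGraph_adj, sub_eq_iff_eq_add', sub_eq_iff_eq_add'] at h
    rcases h with rfl | rfl <;> simp only [f, Fin.val_add_one, Fin.ext_iff, Fin.val_last] <;>
      split_ifs <;> omega
  obtain ⟨p, hp⟩ := cycleGraph_connected.exists_walk_length_eq_edist (0 : Fin (N+2))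
    ⟨N/2 + 1, by omega⟩
  have := p.apply_le_apply_add_length hf
  simp only [f, Fin.val_zero] at this
  calc ((N/2 + 1 : ℕ) : ℕ∞) ≤ p.length := by exact_mod_cast (by omega : N/2 + 1 ≤ p.length)
    _ = _ := hp
    _ ≤ _ := edist_le_ediam

end SimpleGraph

theorem stmt7_general (n : ℕ) :
    Nonempty ((DicolGraph (CycArc n) 2) ≃g SimpleGraph.cycleGraph (4*n+2)) ∧
    (DicolGraph (CycArc n) 2).diam = 2*n + 1 := by
  refine ⟨⟨(CycArc.cycleGraphIsoDicolGraph n).symm⟩, ?_⟩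
  rw [SimpleGraph.diam, (CycArc.cycleGraphIsoDicolGraph n).ediam_eq,
    SimpleGraph.cycleGraph_ediam, ENat.toNat_natCast]
  omega

theorem stmt7 (n : ℕ) (hn : 1 ≤ n) :
    Nonempty ((DicolGraph (CycArc n) 2) ≃g SimpleGraph.cycleGraph (4*n+2)) ∧
    (DicolGraph (CycArc n) 2).diam = 2*n + 1 :=
  stmt7_general n
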